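/- If two clusters s, s' ∈ Σ have the same colour, then |s ∩ R₁| ≡ |s' ∩ R₁| (mod 2), |s ∩ R₂| ≡ |s' ∩ R₂| (mod 2), and |s| ≡ |s'| (mod 2). -/

import Mathlib

/-- Colours of roots and clusters. -/
inductive Colour : Type
  | red | blue | purple | black
deriving DecidableEq

/-- A cluster picture on a finite set `R`: a collection of nonempty subsets of `R`
containing `R` and all singletons, any two of which are nested or disjoint. -/
def IsClusterPicture {α : Type*} [DecidableEq α] (R : Finset α) (CP : Set (Finset α)) : Prop :=
  (∀ s ∈ CP, s.Nonempty ∧ s ⊆ R) ∧ R ∈ CP ∧ (∀ r ∈ R, ({r} : Finset α) ∈ CP) ∧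
    ∀ s ∈ CP, ∀ t ∈ CP, s ⊆ t ∨ t ⊆ s ∨ s ∩ t = ∅

/-- `t` is a child of `s`: a maximal cluster properly contained in `s`. -/
def IsChildOf {α : Type*} [DecidableEq α] (CP : Set (Finset α)) (t s : Finset α) : Prop :=
  t ∈ CP ∧ t ⊂ s ∧ ∀ u ∈ CP, u ⊂ s → t ⊆ u → u = t

/-- The number of children of `s` coloured red or purple. -/
noncomputable def aCount {α : Type*} [DecidableEq α] (CP : Set (Finset α)) (col : Finset α → Colour)
    (s : Finset α) : ℕ :=
  Set.ncard {t : Finset α | IsChildOf CP t s ∧ (col t = Colour.red ∨ col t = Colour.purple)}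

/-- The number of children of `s` coloured blue or purple. -/
noncomputable def bCount {α : Type*} [DecidableEq α] (CP : Set (Finset α)) (col : Finset α → Colour)
    (s : Finset α) : ℕ :=
  Set.ncard {t : Finset α | IsChildOf CP t s ∧ (col t = Colour.blue ∨ col t = Colour.purple)}

/-- `col` is the recursive colouring of the clusters of the cluster picture `CP`
induced by the colouring `c` of the roots. -/
def IsColouring {α : Type*} [DecidableEq α] (R : Finset α) (CP : Set (Finset α))
    (c : α → Colour) (col : Finset α → Colour) : Prop :=
  (∀ r ∈ R, col {r} = c r) ∧
    ∀ s ∈ CP, 2 ≤ s.card →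
      ((Odd (aCount CP col s) ∧ Even (bCount CP col s)) → col s = Colour.red) ∧
      ((Odd (bCount CP col s) ∧ Even (aCount CP col s)) → col s = Colour.blue) ∧
      ((Odd (aCount CP col s) ∧ Odd (bCount CP col s)) → col s = Colour.purple) ∧
      ((Even (aCount CP col s) ∧ Even (bCount CP col s)) → col s = Colour.black)

/-- A cluster is chromatic if it is red, blue or purple. -/
def Chromatic {β : Type*} (col : β → Colour) (t : β) : Prop :=
  col t = Colour.red ∨ col t = Colour.blue ∨ col t = Colour.purple


open Classical in
/-- Parity of a sum equals parity of the number of odd terms. -/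
private lemma sum_mod_two {β : Type*} (T : Finset β) (f : β → ℕ) :
    (∑ t ∈ T, f t) % 2 = (T.filter (fun t => Odd (f t))).card % 2 := by
  classical
  induction T using Finset.induction_on with
  | empty => simp
  | insert _ _ ha ih =>
    rename_i a T'
    rw [Finset.sum_insert ha, Finset.filter_insert]
    by_cases h : Odd (f a)
    · rw [if_pos h, Finset.card_insert_of_notMem (by simp [ha])]
      obtain ⟨k, hk⟩ := h
      omega
    · rw [if_neg h]
      rw [Nat.not_odd_iff_even] at h
      obtain ⟨k, hk⟩ := h
      omega

private lemma char_of_P {r b : ℕ} {co : Colour}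
    (hP : (Odd r ∧ Even b → co = Colour.red) ∧ (Odd b ∧ Even r → co = Colour.blue) ∧
      (Odd r ∧ Odd b → co = Colour.purple) ∧ (Even r ∧ Even b → co = Colour.black)) :
    (Odd r ↔ (co = Colour.red ∨ co = Colour.purple)) ∧
    (Odd b ↔ (co = Colour.blue ∨ co = Colour.purple)) := by
  rcases Nat.even_or_odd r with hre | hro <;> rcases Nat.even_or_odd b with hbe | hbo
  · have hco := hP.2.2.2 ⟨hre, hbe⟩; subst hco
    simp [Nat.odd_iff, Nat.even_iff.mp hre, Nat.even_iff.mp hbe]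
  · have hco := hP.2.1 ⟨hbo, hre⟩; subst hco
    simp [Nat.odd_iff, Nat.even_iff.mp hre, Nat.odd_iff.mp hbo]
  · have hco := hP.1 ⟨hro, hbe⟩; subst hco
    simp [Nat.odd_iff, Nat.odd_iff.mp hro, Nat.even_iff.mp hbe]
  · have hco := hP.2.2.1 ⟨hro, hbo⟩; subst hco
    simp [Nat.odd_iff, Nat.odd_iff.mp hro, Nat.odd_iff.mp hbo]

private lemma exists_child {α : Type*} [DecidableEq α] {R : Finset α} {CP : Set (Finset α)}
    (hCP : IsClusterPicture R CP) {s : Finset α} (hs : s ∈ CP) (h2 : 2 ≤ s.card)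
    {r : α} (hr : r ∈ s) : ∃ t, IsChildOf CP t s ∧ r ∈ t := by
  classical
  set S : Finset (Finset α) := s.powerset.filter (fun u => u ∈ CP ∧ u ⊂ s ∧ r ∈ u) with hS
  have hrR : r ∈ R := (hCP.1 s hs).2 hr
  have hsingCP : ({r} : Finset α) ∈ CP := hCP.2.2.1 r hrR
  have hsub : ({r} : Finset α) ⊆ s := Finset.singleton_subset_iff.mpr hr
  have hss : ({r} : Finset α) ⊂ s := by
    refine lt_of_le_of_ne hsub ?_
    intro h
    rw [← h] at h2
    simp at h2
  have hmem : ({r} : Finset α) ∈ S := by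
    simp only [hS, Finset.mem_filter, Finset.mem_powerset]
    exact ⟨hsub, hsingCP, hss, Finset.mem_singleton_self r⟩
  obtain ⟨t, htS, hmax⟩ := S.exists_max_image Finset.card ⟨_, hmem⟩
  simp only [hS, Finset.mem_filter, Finset.mem_powerset] at htS
  refine ⟨t, ⟨htS.2.1, htS.2.2.1, ?_⟩, htS.2.2.2⟩
  intro u huCP hus htu
  have huS : u ∈ S := by
    simp only [hS, Finset.mem_filter, Finset.mem_powerset]
    exact ⟨hus.1, huCP, hus, htu htS.2.2.2⟩
  exact (Finset.eq_of_subset_of_card_le htu (hmax u huS)).symm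

private lemma children_disjoint {α : Type*} [DecidableEq α] {R : Finset α} {CP : Set (Finset α)}
    (hCP : IsClusterPicture R CP) {s t t' : Finset α}
    (ht : IsChildOf CP t s) (ht' : IsChildOf CP t' s) (hne : t ≠ t') :
    Disjoint t t' := by
  rcases hCP.2.2.2 t ht.1 t' ht'.1 with h | h | h
  · exact absurd (ht.2.2 t' ht'.1 ht'.2.1 h).symm hne
  · exact absurd (ht'.2.2 t ht.1 ht.2.1 h) hne
  · exact Finset.disjoint_iff_inter_eq_empty.mpr h

/-- The key induction: the colour of a cluster is determined by the parities of its
red-root count and blue-root count. -/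
private lemma parity_char {α : Type*} [DecidableEq α] (R : Finset α)
    (c : α → Colour) (hc : ∀ r ∈ R, c r = Colour.red ∨ c r = Colour.blue)
    (CP : Set (Finset α)) (hCP : IsClusterPicture R CP)
    (col : Finset α → Colour) (hcol : IsColouring R CP c col) :
    ∀ n (s : Finset α), s ∈ CP → s.card ≤ n →
      ((Odd (s ∩ R.filter (fun r => c r = Colour.red)).card ∧
        Even (s ∩ R.filter (fun r => c r = Colour.blue)).card) → col s = Colour.red) ∧
      ((Odd (s ∩ R.filter (fun r => c r = Colour.blue)).card ∧
        Even (s ∩ R.filter (fun r => c r = Colour.red)).card) → col s = Colour.blue) ∧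
      ((Odd (s ∩ R.filter (fun r => c r = Colour.red)).card ∧
        Odd (s ∩ R.filter (fun r => c r = Colour.blue)).card) → col s = Colour.purple) ∧
      ((Even (s ∩ R.filter (fun r => c r = Colour.red)).card ∧
        Even (s ∩ R.filter (fun r => c r = Colour.blue)).card) → col s = Colour.black) := by
  classical
  intro n
  induction n with
  | zero =>
    intro s hsCP hcard
    have := (hCP.1 s hsCP).1
    rw [Nat.le_zero, Finset.card_eq_zero] at hcard
    simp [hcard] at this
  | succ n ih =>
    intro s hsCP hcard
    set rcnt := fun u : Finset α => (u ∩ R.filter (fun r => c r = Colour.red)).card with hrcnt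
    set bcnt := fun u : Finset α => (u ∩ R.filter (fun r => c r = Colour.blue)).card with hbcnt
    rcases Nat.lt_or_ge s.card 2 with h1 | h2
    · -- singleton case
      have hne := (hCP.1 s hsCP).1
      have hcard1 : s.card = 1 := by
        have := Finset.card_pos.mpr hne
        omega
      obtain ⟨r, hr⟩ := Finset.card_eq_one.mp hcard1
      subst hr
      have hrR : r ∈ R := (hCP.1 _ hsCP).2 (Finset.mem_singleton_self r)
      have hcolr : col {r} = c r := hcol.1 r hrR
      rcases hc r hrR with h | h
      · have hrc : ({r} : Finset α) ∩ R.filter (fun x => c x = Colour.red) = {r} := by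
          ext x; simp only [Finset.mem_inter, Finset.mem_singleton, Finset.mem_filter]
          constructor
          · rintro ⟨hx, _⟩; exact hx
          · rintro rfl; exact ⟨rfl, hrR, h⟩
        have hbc : ({r} : Finset α) ∩ R.filter (fun x => c x = Colour.blue) = ∅ := by
          ext x; simp only [Finset.mem_inter, Finset.mem_singleton, Finset.mem_filter,
            Finset.notMem_empty, iff_false]
          rintro ⟨rfl, _, hx⟩; rw [h] at hx; exact Colour.noConfusion hx
        rw [hrc, hbc]
        simp only [Finset.card_singleton, Finset.card_empty]
        refine ⟨fun _ => by rw [hcolr, h], ?_, ?_, ?_⟩ <;>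
          · rintro ⟨h1', h2'⟩ <;> simp_all <;> omega
      · have hrc : ({r} : Finset α) ∩ R.filter (fun x => c x = Colour.red) = ∅ := by
          ext x; simp only [Finset.mem_inter, Finset.mem_singleton, Finset.mem_filter,
            Finset.notMem_empty, iff_false]
          rintro ⟨rfl, _, hx⟩; rw [h] at hx; exact Colour.noConfusion hx
        have hbc : ({r} : Finset α) ∩ R.filter (fun x => c x = Colour.blue) = {r} := by
          ext x; simp only [Finset.mem_inter, Finset.mem_singleton, Finset.mem_filter]
          constructor
          · rintro ⟨hx, _⟩; exact hx
          · rintro rfl; exact ⟨rfl, hrR, h⟩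
        rw [hrc, hbc]
        simp only [Finset.card_singleton, Finset.card_empty]
        refine ⟨?_, fun _ => by rw [hcolr, h], ?_, ?_⟩ <;>
          · rintro ⟨h1', h2'⟩ <;> simp_all <;> omega
    · -- inductive case: s has at least two elements
      set T : Finset (Finset α) := s.powerset.filter (fun t => IsChildOf CP t s) with hT
      have hTchild : ∀ t ∈ T, IsChildOf CP t s := by
        intro t ht
        exact (Finset.mem_filter.mp ht).2
      have hTall : ∀ t, IsChildOf CP t s → t ∈ T := by
        intro t ht
        exact Finset.mem_filter.mpr ⟨Finset.mem_powerset.mpr ht.2.1.1, ht⟩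
      have hsT : s = T.biUnion id := by
        ext x
        simp only [Finset.mem_biUnion, id]
        constructor
        · intro hx
          obtain ⟨t, ht, hxt⟩ := exists_child hCP hsCP h2 hx
          exact ⟨t, hTall t ht, hxt⟩
        · rintro ⟨t, htT, hxt⟩
          exact (hTchild t htT).2.1.1 hxt
      have hdisj : ∀ t ∈ T, ∀ t' ∈ T, t ≠ t' → Disjoint t t' :=
        fun t ht t' ht' hne => children_disjoint hCP (hTchild t ht) (hTchild t' ht') hne
      -- IH characterisation for each child
      have hIH : ∀ t ∈ T, (Odd (rcnt t) ↔ (col t = Colour.red ∨ col t = Colour.purple)) ∧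
          (Odd (bcnt t) ↔ (col t = Colour.blue ∨ col t = Colour.purple)) := by
        intro t htT
        have hchild := hTchild t htT
        have hlt : t.card < s.card := Finset.card_lt_card hchild.2.1
        exact char_of_P (ih t hchild.1 (by omega))
      -- counting: rcnt s = sum over children
      have hsum : ∀ X : Finset α, (s ∩ X).card = ∑ t ∈ T, (t ∩ X).card := by
        intro X
        have : s ∩ X = T.biUnion (fun t => t ∩ X) := by
          rw [hsT, Finset.biUnion_inter]
          simp [id]
        rw [this]
        exact Finset.card_biUnion (fun t ht t' ht' hne =>
          Finset.disjoint_of_subset_left Finset.inter_subset_left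
            (Finset.disjoint_of_subset_right Finset.inter_subset_left (hdisj t ht t' ht' hne)))
      -- aCount as a filter-card
      have haC : aCount CP col s = (T.filter (fun t => col t = Colour.red ∨
          col t = Colour.purple)).card := by
        rw [aCount, show {t : Finset α | IsChildOf CP t s ∧ (col t = Colour.red ∨
            col t = Colour.purple)} = ↑(T.filter (fun t => col t = Colour.red ∨
            col t = Colour.purple)) from ?_, Set.ncard_coe_finset]
        ext t
        simp only [Set.mem_setOf_eq, Finset.coe_filter, Finset.mem_filter]
        constructor
        · rintro ⟨h1, h2⟩; exact ⟨hTall t h1, h2⟩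
        · rintro ⟨h1, h2⟩; exact ⟨hTchild t h1, h2⟩
      have hbC : bCount CP col s = (T.filter (fun t => col t = Colour.blue ∨
          col t = Colour.purple)).card := by
        rw [bCount, show {t : Finset α | IsChildOf CP t s ∧ (col t = Colour.blue ∨
            col t = Colour.purple)} = ↑(T.filter (fun t => col t = Colour.blue ∨
            col t = Colour.purple)) from ?_, Set.ncard_coe_finset]
        ext t
        simp only [Set.mem_setOf_eq, Finset.coe_filter, Finset.mem_filter]
        constructor
        · rintro ⟨h1, h2⟩; exact ⟨hTall t h1, h2⟩
        · rintro ⟨h1, h2⟩; exact ⟨hTchild t h1, h2⟩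
      -- parities match
      have hra : (s ∩ R.filter (fun r => c r = Colour.red)).card % 2 =
          aCount CP col s % 2 := by
        have h1 : (s ∩ R.filter (fun r => c r = Colour.red)).card = ∑ t ∈ T, rcnt t := hsum _
        rw [h1, sum_mod_two, haC,
          Finset.filter_congr (fun t ht => ((hIH t ht).1))]
      have hrb : (s ∩ R.filter (fun r => c r = Colour.blue)).card % 2 =
          bCount CP col s % 2 := by
        have h1 : (s ∩ R.filter (fun r => c r = Colour.blue)).card = ∑ t ∈ T, bcnt t := hsum _
        rw [h1, sum_mod_two, hbC,
          Finset.filter_congr (fun t ht => ((hIH t ht).2))]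
      have hrule := hcol.2 s hsCP h2
      refine ⟨?_, ?_, ?_, ?_⟩
      · rintro ⟨h1', h2'⟩
        exact hrule.1 ⟨by rw [Nat.odd_iff] at h1' ⊢; omega,
          by rw [Nat.even_iff] at h2' ⊢; omega⟩
      · rintro ⟨h1', h2'⟩
        exact hrule.2.1 ⟨by rw [Nat.odd_iff] at h1' ⊢; omega,
          by rw [Nat.even_iff] at h2' ⊢; omega⟩
      · rintro ⟨h1', h2'⟩
        exact hrule.2.2.1 ⟨by rw [Nat.odd_iff] at h1' ⊢; omega,
          by rw [Nat.odd_iff] at h2' ⊢; omega⟩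
      · rintro ⟨h1', h2'⟩
        exact hrule.2.2.2 ⟨by rw [Nat.even_iff] at h1' ⊢; omega,
          by rw [Nat.even_iff] at h2' ⊢; omega⟩

/-- Clusters of the same colour have the same parities of red roots, blue roots
and total size. -/
theorem same_colour_same_parities {α : Type*} [DecidableEq α] (R : Finset α) (hR : R.Nonempty)
    (c : α → Colour) (hc : ∀ r ∈ R, c r = Colour.red ∨ c r = Colour.blue)
    (CP : Set (Finset α)) (hCP : IsClusterPicture R CP)
    (col : Finset α → Colour) (hcol : IsColouring R CP c col)
    (s s' : Finset α) (hs : s ∈ CP) (hs' : s' ∈ CP) (hcolour : col s = col s') :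
    (s ∩ R.filter (fun r => c r = Colour.red)).card ≡
      (s' ∩ R.filter (fun r => c r = Colour.red)).card [MOD 2] ∧
    (s ∩ R.filter (fun r => c r = Colour.blue)).card ≡
      (s' ∩ R.filter (fun r => c r = Colour.blue)).card [MOD 2] ∧
    s.card ≡ s'.card [MOD 2] := by
  classical
  have key := parity_char R c hc CP hCP col hcol
  set rc := fun u : Finset α => (u ∩ R.filter (fun r => c r = Colour.red)).card with hrc
  set bc := fun u : Finset α => (u ∩ R.filter (fun r => c r = Colour.blue)).card with hbc
  -- for any cluster u, colour determines parities
  have char : ∀ u ∈ CP, (Odd (rc u) ↔ (col u = Colour.red ∨ col u = Colour.purple)) ∧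
      (Odd (bc u) ↔ (col u = Colour.blue ∨ col u = Colour.purple)) := by
    intro u huCP
    exact char_of_P (key u.card u huCP le_rfl)
  have hchar := char s hs
  have hchar' := char s' hs'
  have h1 : rc s ≡ rc s' [MOD 2] := by
    rw [Nat.ModEq]
    rcases Nat.even_or_odd (rc s) with h | h
    · have h2 : ¬ Odd (rc s') := by
        rw [hchar'.1, ← hcolour, ← hchar.1]
        rw [← Nat.not_odd_iff_even] at h
        exact h
      rw [Nat.not_odd_iff_even] at h2
      rw [Nat.even_iff] at h h2
      omega
    · have h2 : Odd (rc s') := by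
        rw [hchar'.1, ← hcolour, ← hchar.1]
        exact h
      rw [Nat.odd_iff] at h h2
      omega
  have h2 : bc s ≡ bc s' [MOD 2] := by
    rw [Nat.ModEq]
    rcases Nat.even_or_odd (bc s) with h | h
    · have h2 : ¬ Odd (bc s') := by
        rw [hchar'.2, ← hcolour, ← hchar.2]
        rw [← Nat.not_odd_iff_even] at h
        exact h
      rw [Nat.not_odd_iff_even] at h2
      rw [Nat.even_iff] at h h2
      omega
    · have h2 : Odd (bc s') := by
        rw [hchar'.2, ← hcolour, ← hchar.2]
        exact h
      rw [Nat.odd_iff] at h h2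
      omega
  refine ⟨h1, h2, ?_⟩
  -- size = red count + blue count
  have hsplit : ∀ u ∈ CP, u.card = rc u + bc u := by
    intro u huCP
    have hsubR : u ⊆ R := (hCP.1 u huCP).2
    simp only [hrc, hbc]
    rw [← Finset.card_union_of_disjoint]
    · congr 1
      ext x
      simp only [Finset.mem_union, Finset.mem_inter, Finset.mem_filter]
      constructor
      · intro hx
        rcases hc x (hsubR hx) with h | h
        · exact Or.inl ⟨hx, hsubR hx, h⟩
        · exact Or.inr ⟨hx, hsubR hx, h⟩
      · rintro (⟨hx, _⟩ | ⟨hx, _⟩) <;> exact hx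
    · refine Finset.disjoint_left.mpr ?_
      intro x hx1 hx2
      simp only [Finset.mem_inter, Finset.mem_filter] at hx1 hx2
      rw [hx1.2.2] at hx2
      exact Colour.noConfusion hx2.2.2
  rw [hsplit s hs, hsplit s' hs']
  exact Nat.ModEq.add h1 h2
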